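/- Let W be a symmetric denoiser, A ∈ ℝ^{m×n}, ρ > 0, and define F = 2(I + ρAᵀA)^{-1} − I, V = 2W − I, and R = ½(I + FV). Then ‖R‖₂ < 1 if and only if ker(I−W) ∩ ker(A) = {0}. -/

import Mathlib

open Matrix Filter

/-- Euclidean norm of a vector in ℝ^n. -/
noncomputable def vNorm {n : ℕ} (x : Fin n → ℝ) : ℝ := Real.sqrt (∑ i, x i ^ 2)

/-- Operator 2-norm of a matrix (sup of ‖Mx‖₂ over the unit sphere). -/
noncomputable def mNorm {m n : ℕ} (M : Matrix (Fin m) (Fin n) ℝ) : ℝ :=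
  sSup ((fun x => vNorm (M.mulVec x)) '' {x | vNorm x = 1})

/-- Spectral radius of a square real matrix. -/
noncomputable def sRad {n : ℕ} (M : Matrix (Fin n) (Fin n) ℝ) : ℝ :=
  sSup ((fun μ => |μ|) '' spectrum ℝ M)

namespace Stmt4Aux

variable {m n : ℕ}

lemma dot_nonneg (x : Fin n → ℝ) : (0:ℝ) ≤ x ⬝ᵥ x :=
  Finset.sum_nonneg fun i _ => mul_self_nonneg _

lemma dot_eq_zero {x : Fin n → ℝ} (h : x ⬝ᵥ x = 0) : x = 0 := by
  funext i
  have h0 := (Finset.sum_eq_zero_iff_of_nonneg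
    (fun j (_ : j ∈ Finset.univ) => mul_self_nonneg (x j))).mp h i (Finset.mem_univ i)
  exact mul_self_eq_zero.mp h0

lemma vNorm_eq (x : Fin n → ℝ) : vNorm x = Real.sqrt (x ⬝ᵥ x) := by
  simp [vNorm, dotProduct, sq]

lemma vNorm_eq_one_iff {x : Fin n → ℝ} : vNorm x = 1 ↔ x ⬝ᵥ x = 1 := by
  rw [vNorm_eq, Real.sqrt_eq_one]

lemma vNorm_lt_one_iff {x : Fin n → ℝ} : vNorm x < 1 ↔ x ⬝ᵥ x < 1 := by
  rw [vNorm_eq]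
  constructor
  · intro h
    by_contra hc
    push_neg at hc
    have := Real.sqrt_le_sqrt (by linarith : (1:ℝ) ≤ x ⬝ᵥ x)
    rw [Real.sqrt_one] at this; linarith
  · intro h
    calc Real.sqrt (x ⬝ᵥ x) < Real.sqrt 1 :=
          (Real.sqrt_lt_sqrt_iff (dot_nonneg x)).mpr h
      _ = 1 := Real.sqrt_one

lemma vNorm_le_iff {x y : Fin n → ℝ} (h : x ⬝ᵥ x ≤ y ⬝ᵥ y) : vNorm x ≤ vNorm y := by
  rw [vNorm_eq, vNorm_eq]; exact Real.sqrt_le_sqrt h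

lemma vNorm_smul (c : ℝ) (x : Fin n → ℝ) : vNorm (c • x) = |c| * vNorm x := by
  rw [vNorm_eq, vNorm_eq]
  have : (c • x) ⬝ᵥ (c • x) = c^2 * (x ⬝ᵥ x) := by
    simp [smul_dotProduct, dotProduct_smul]; ring
  rw [this, Real.sqrt_mul (sq_nonneg c), Real.sqrt_sq_eq_abs]

lemma vNorm_eq_zero_iff {x : Fin n → ℝ} : vNorm x = 0 ↔ x = 0 := by
  rw [vNorm_eq]
  constructor
  · intro h
    exact dot_eq_zero ((Real.sqrt_eq_zero (dot_nonneg x)).mp h)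
  · rintro rfl; simp

lemma dot_mulVec_symm {M : Matrix (Fin n) (Fin n) ℝ} (hM : Mᵀ = M) (x y : Fin n → ℝ) :
    x ⬝ᵥ M *ᵥ y = y ⬝ᵥ M *ᵥ x := by
  rw [Matrix.dotProduct_mulVec, ← Matrix.mulVec_transpose, hM, dotProduct_comm]

lemma dot_transpose (x : Fin n → ℝ) (w : Fin m → ℝ) (A : Matrix (Fin m) (Fin n) ℝ) :
    x ⬝ᵥ Aᵀ *ᵥ w = (A *ᵥ x) ⬝ᵥ w := by
  rw [Matrix.dotProduct_mulVec, Matrix.vecMul_transpose]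

/-- Cauchy–Schwarz for a PSD bilinear form. -/
lemma cs_form {M : Matrix (Fin n) (Fin n) ℝ} (hsym : Mᵀ = M)
    (hpsd : ∀ v, (0:ℝ) ≤ v ⬝ᵥ M *ᵥ v) (x y : Fin n → ℝ) :
    (x ⬝ᵥ M *ᵥ y)^2 ≤ (x ⬝ᵥ M *ᵥ x) * (y ⬝ᵥ M *ᵥ y) := by
  have key : ∀ t : ℝ,
      0 ≤ (x ⬝ᵥ M *ᵥ x) * (t * t) + (2 * (x ⬝ᵥ M *ᵥ y)) * t + (y ⬝ᵥ M *ᵥ y) := by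
    intro t
    have h := hpsd (t • x + y)
    have expand : (t • x + y) ⬝ᵥ M *ᵥ (t • x + y)
        = (x ⬝ᵥ M *ᵥ x) * (t * t) + (2 * (x ⬝ᵥ M *ᵥ y)) * t + (y ⬝ᵥ M *ᵥ y) := by
      rw [Matrix.mulVec_add, Matrix.mulVec_smul]
      rw [dotProduct_add, add_dotProduct, add_dotProduct]
      rw [dotProduct_smul, smul_dotProduct, smul_dotProduct, dotProduct_smul]
      rw [dot_mulVec_symm hsym y x]
      simp [smul_eq_mul]; ring
    rw [expand] at h; exact h
  have hd := discrim_le_zero key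
  rw [discrim] at hd
  nlinarith [hd]

end Stmt4Aux

set_option maxHeartbeats 1000000 in
open Stmt4Aux in
/-- For a symmetric denoiser `W`, `A ∈ ℝ^{m×n}`, `ρ > 0`, with
`F = 2(I + ρAᵀA)⁻¹ − I`, `V = 2W − I`, `R = ½(I + FV)`, one has
`‖R‖₂ < 1 ↔ ker(I−W) ∩ ker(A) = {0}`. -/
theorem statement4 {m n : ℕ} (W : Matrix (Fin n) (Fin n) ℝ)
    (A : Matrix (Fin m) (Fin n) ℝ) (ρ : ℝ) (hρ : 0 < ρ)
    (hWpsd : W.PosSemidef) (hWnn : ∀ i j, 0 ≤ W i j)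
    (hWstoch : W.mulVec (fun _ => 1) = fun _ => 1)
    (F V R : Matrix (Fin n) (Fin n) ℝ)
    (hF : F = (2 : ℝ) • (1 + ρ • (Aᵀ * A))⁻¹ - 1)
    (hV : V = (2 : ℝ) • W - 1)
    (hR : R = (1/2 : ℝ) • (1 + F * V)) :
    mNorm R < 1 ↔
      LinearMap.ker (Matrix.mulVecLin (1 - W)) ⊓ LinearMap.ker A.mulVecLin = ⊥ := by
  classical
  -- notation
  set B : Matrix (Fin n) (Fin n) ℝ := 1 + ρ • (Aᵀ * A) with hB
  -- basic W facts
  have hWsym : Wᵀ = W := hWpsd.1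
  have hWpos : ∀ v : Fin n → ℝ, (0:ℝ) ≤ v ⬝ᵥ W *ᵥ v := by
    intro v
    simpa using (Matrix.posSemidef_iff_dotProduct_mulVec.mp hWpsd).2 v
  have hrow : ∀ i, ∑ j, W i j = 1 := by
    intro i
    have h := congrFun hWstoch i
    simpa [Matrix.mulVec, dotProduct] using h
  have hcol : ∀ j, ∑ i, W i j = 1 := by
    intro j
    have : ∀ i, W i j = W j i := fun i => by
      conv_lhs => rw [← hWsym]
      rfl
    simp_rw [this]
    exact hrow j
  -- W ≤ I : xᵀW x ≤ xᵀ x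
  have hWle : ∀ x : Fin n → ℝ, x ⬝ᵥ W *ᵥ x ≤ x ⬝ᵥ x := by
    intro x
    have key : (0:ℝ) ≤ ∑ i, ∑ j, W i j * (x i - x j)^2 :=
      Finset.sum_nonneg fun i _ => Finset.sum_nonneg fun j _ =>
        mul_nonneg (hWnn i j) (sq_nonneg _)
    have e1 : ∑ i, ∑ j, W i j * (x i)^2 = x ⬝ᵥ x := by
      have : ∀ i, ∑ j, W i j * (x i)^2 = (x i)^2 := by
        intro i
        rw [← Finset.sum_mul, hrow i, one_mul]
      simp_rw [this]
      simp [dotProduct, sq]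
    have e2 : ∑ i, ∑ j, W i j * (x j)^2 = x ⬝ᵥ x := by
      rw [Finset.sum_comm]
      have : ∀ j, ∑ i, W i j * (x j)^2 = (x j)^2 := by
        intro j
        rw [← Finset.sum_mul, hcol j, one_mul]
      simp_rw [this]
      simp [dotProduct, sq]
    have e3 : ∑ i, ∑ j, W i j * (x i * x j) = x ⬝ᵥ W *ᵥ x := by
      simp only [dotProduct, Matrix.mulVec, Finset.mul_sum]
      refine Finset.sum_congr rfl fun i _ => Finset.sum_congr rfl fun j _ => by ring
    have expand : ∑ i, ∑ j, W i j * (x i - x j)^2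
        = (∑ i, ∑ j, W i j * (x i)^2) - 2 * (∑ i, ∑ j, W i j * (x i * x j))
          + (∑ i, ∑ j, W i j * (x j)^2) := by
      rw [Finset.mul_sum, ← Finset.sum_sub_distrib, ← Finset.sum_add_distrib]
      refine Finset.sum_congr rfl fun i _ => ?_
      rw [Finset.mul_sum, ← Finset.sum_sub_distrib, ← Finset.sum_add_distrib]
      refine Finset.sum_congr rfl fun j _ => by ring
    rw [expand, e1, e2, e3] at key
    linarith
  -- ‖Wx‖² ≤ xᵀWx
  have hW2 : ∀ x : Fin n → ℝ, (W *ᵥ x) ⬝ᵥ (W *ᵥ x) ≤ x ⬝ᵥ W *ᵥ x := by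
    intro x
    set u : ℝ := (W *ᵥ x) ⬝ᵥ (W *ᵥ x) with hu
    have hxu : x ⬝ᵥ W *ᵥ (W *ᵥ x) = u := by
      rw [Matrix.dotProduct_mulVec, ← Matrix.mulVec_transpose, hWsym]
    have hcs := cs_form hWsym hWpos x (W *ᵥ x)
    rw [hxu] at hcs
    have h1 : (W *ᵥ x) ⬝ᵥ W *ᵥ (W *ᵥ x) ≤ u := hWle (W *ᵥ x)
    have h2 : (0:ℝ) ≤ (W *ᵥ x) ⬝ᵥ W *ᵥ (W *ᵥ x) := hWpos (W *ᵥ x)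
    have h3 : (0:ℝ) ≤ x ⬝ᵥ W *ᵥ x := hWpos x
    have h4 : (0:ℝ) ≤ u := dot_nonneg _
    nlinarith
  -- V contraction
  have hVx : ∀ x : Fin n → ℝ, V *ᵥ x = (2:ℝ) • (W *ᵥ x) - x := by
    intro x
    rw [hV, Matrix.sub_mulVec, Matrix.smul_mulVec, Matrix.one_mulVec]
  have hVcon : ∀ x : Fin n → ℝ, (V *ᵥ x) ⬝ᵥ (V *ᵥ x) ≤ x ⬝ᵥ x := by
    intro x
    rw [hVx]
    have expand : ((2:ℝ) • (W *ᵥ x) - x) ⬝ᵥ ((2:ℝ) • (W *ᵥ x) - x)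
        = 4 * ((W *ᵥ x) ⬝ᵥ (W *ᵥ x)) - 4 * (x ⬝ᵥ W *ᵥ x) + x ⬝ᵥ x := by
      rw [dotProduct_sub, sub_dotProduct, sub_dotProduct]
      rw [dotProduct_smul, smul_dotProduct, smul_dotProduct, dotProduct_smul]
      rw [dotProduct_comm x ((W *ᵥ x))]
      simp [smul_eq_mul]; ring
    rw [expand]
    have := hW2 x
    linarith
  -- B invertible
  have hBdet : IsUnit B.det := by
    rw [isUnit_iff_ne_zero]
    intro hdet
    obtain ⟨v, hv0, hv⟩ := (Matrix.exists_mulVec_eq_zero_iff).mpr hdet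
    have hdv : v ⬝ᵥ B *ᵥ v = 0 := by rw [hv]; simp
    have hBv : v ⬝ᵥ B *ᵥ v = v ⬝ᵥ v + ρ * ((A *ᵥ v) ⬝ᵥ (A *ᵥ v)) := by
      rw [hB, Matrix.add_mulVec, Matrix.one_mulVec, Matrix.smul_mulVec]
      rw [dotProduct_add, dotProduct_smul]
      rw [← Matrix.mulVec_mulVec, dot_transpose]
      simp [smul_eq_mul]
    rw [hBv] at hdv
    have h1 : (0:ℝ) ≤ v ⬝ᵥ v := dot_nonneg v
    have h2 : (0:ℝ) ≤ (A *ᵥ v) ⬝ᵥ (A *ᵥ v) := dot_nonneg _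
    have : v ⬝ᵥ v = 0 := by nlinarith
    exact hv0 (dot_eq_zero this)
  have hBPinv : B * B⁻¹ = 1 := Matrix.mul_nonsing_inv B hBdet
  have hPBinv : B⁻¹ * B = 1 := Matrix.nonsing_inv_mul B hBdet
  -- F basics: with z = B⁻¹ y, we have y = z + ρ AᵀA z and F y = 2z - y
  have hyz : ∀ y : Fin n → ℝ,
      y = (B⁻¹ *ᵥ y) + ρ • (Aᵀ *ᵥ (A *ᵥ (B⁻¹ *ᵥ y))) := by
    intro y
    have h0 : B *ᵥ (B⁻¹ *ᵥ y) = y := by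
      rw [Matrix.mulVec_mulVec, hBPinv, Matrix.one_mulVec]
    conv_lhs => rw [← h0]
    rw [hB, Matrix.add_mulVec, Matrix.one_mulVec, Matrix.smul_mulVec,
      ← Matrix.mulVec_mulVec]
  have hFy : ∀ y : Fin n → ℝ, F *ᵥ y = (2:ℝ) • (B⁻¹ *ᵥ y) - y := by
    intro y
    rw [hF, hB, Matrix.sub_mulVec, Matrix.smul_mulVec, Matrix.one_mulVec]
  -- F identity : ‖Fy‖² = ‖y‖² - 4ρ‖A z‖²
  have hFid : ∀ y : Fin n → ℝ,
      (F *ᵥ y) ⬝ᵥ (F *ᵥ y)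
        = y ⬝ᵥ y - 4 * ρ * ((A *ᵥ (B⁻¹ *ᵥ y)) ⬝ᵥ (A *ᵥ (B⁻¹ *ᵥ y))) := by
    intro y
    set z : Fin n → ℝ := B⁻¹ *ᵥ y with hz
    have hzy : z ⬝ᵥ y = z ⬝ᵥ z + ρ * ((A *ᵥ z) ⬝ᵥ (A *ᵥ z)) := by
      conv_lhs => rw [hyz y]
      rw [dotProduct_add, dotProduct_smul, ← hz, dot_transpose, smul_eq_mul]
    rw [hFy y]
    have expand : ((2:ℝ) • z - y) ⬝ᵥ ((2:ℝ) • z - y)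
        = 4 * (z ⬝ᵥ z) - 4 * (z ⬝ᵥ y) + y ⬝ᵥ y := by
      rw [dotProduct_sub, sub_dotProduct, sub_dotProduct]
      rw [dotProduct_smul, smul_dotProduct, smul_dotProduct, dotProduct_smul]
      rw [dotProduct_comm y z]
      simp [smul_eq_mul]; ring
    rw [expand, hzy]; ring
  have hFcon : ∀ y : Fin n → ℝ, (F *ᵥ y) ⬝ᵥ (F *ᵥ y) ≤ y ⬝ᵥ y := by
    intro y
    rw [hFid y]
    have h2 : (0:ℝ) ≤ (A *ᵥ (B⁻¹ *ᵥ y)) ⬝ᵥ (A *ᵥ (B⁻¹ *ᵥ y)) := dot_nonneg _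
    nlinarith
  -- F equality case
  have hFfix : ∀ y : Fin n → ℝ, A *ᵥ (B⁻¹ *ᵥ y) = 0 → F *ᵥ y = y ∧ A *ᵥ y = 0 := by
    intro y hAz
    have hy : y = B⁻¹ *ᵥ y := by
      conv_lhs => rw [hyz y, hAz]
      simp
    constructor
    · rw [hFy y, ← hy]
      funext i; simp [smul_eq_mul]; ring
    · rw [hy, hAz]
  -- R action
  have hRx : ∀ x : Fin n → ℝ, R *ᵥ x = (1/2 : ℝ) • (x + F *ᵥ (V *ᵥ x)) := by
    intro x
    rw [hR, Matrix.smul_mulVec, Matrix.add_mulVec, Matrix.one_mulVec,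
      ← Matrix.mulVec_mulVec]
  -- nonstrict contraction of R
  have hRcon : ∀ x : Fin n → ℝ, (R *ᵥ x) ⬝ᵥ (R *ᵥ x) ≤ x ⬝ᵥ x := by
    intro x
    rw [hRx x]
    set y : Fin n → ℝ := F *ᵥ (V *ᵥ x) with hy
    have hb : y ⬝ᵥ y ≤ x ⬝ᵥ x := le_trans (hFcon _) (hVcon x)
    have hcs : (x ⬝ᵥ y)^2 ≤ (x ⬝ᵥ x) * (y ⬝ᵥ y) := by
      have := cs_form (M := (1 : Matrix (Fin n) (Fin n) ℝ)) (by simp)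
        (fun v => by simpa using dot_nonneg v) x y
      simpa using this
    have expand : ((1/2 : ℝ) • (x + y)) ⬝ᵥ ((1/2 : ℝ) • (x + y))
        = (1/4) * (x ⬝ᵥ x + 2 * (x ⬝ᵥ y) + y ⬝ᵥ y) := by
      rw [smul_dotProduct, dotProduct_smul]
      rw [dotProduct_add, add_dotProduct, add_dotProduct, dotProduct_comm y x]
      simp [smul_eq_mul]; ring
    rw [expand]
    have ha : (0:ℝ) ≤ x ⬝ᵥ x := dot_nonneg x
    have hbp : (0:ℝ) ≤ y ⬝ᵥ y := dot_nonneg y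
    nlinarith [sq_nonneg (x ⬝ᵥ x - x ⬝ᵥ y)]
  constructor
  · -- mNorm R < 1 → trivial intersection
    intro hlt
    rw [Submodule.eq_bot_iff]
    intro x hx
    rw [Submodule.mem_inf, LinearMap.mem_ker, LinearMap.mem_ker,
      Matrix.mulVecLin_apply, Matrix.mulVecLin_apply] at hx
    obtain ⟨hx1, hx2⟩ := hx
    by_contra hx0
    -- W x = x
    have hWx : W *ᵥ x = x := by
      rw [Matrix.sub_mulVec, Matrix.one_mulVec, sub_eq_zero] at hx1
      exact hx1.symm
    have hVxx : V *ᵥ x = x := by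
      rw [hVx x, hWx]
      funext i; simp [smul_eq_mul]; ring
    have hBx : B *ᵥ x = x := by
      rw [hB, Matrix.add_mulVec, Matrix.one_mulVec, Matrix.smul_mulVec,
        ← Matrix.mulVec_mulVec, hx2]
      simp
    have hPx : B⁻¹ *ᵥ x = x := by
      conv_lhs => rw [← hBx]
      rw [Matrix.mulVec_mulVec, hPBinv, Matrix.one_mulVec]
    have hFxx : F *ᵥ x = x := by
      rw [hFy x, hPx]
      funext i; simp [smul_eq_mul]; ring
    have hRxx : R *ᵥ x = x := by
      rw [hRx x, hVxx, hFxx]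
      funext i; simp [smul_eq_mul]; ring
    -- normalize
    have hvn0 : vNorm x ≠ 0 := fun h => hx0 (vNorm_eq_zero_iff.mp h)
    have hvnpos : 0 < vNorm x := lt_of_le_of_ne (Real.sqrt_nonneg _) (Ne.symm hvn0)
    set u : Fin n → ℝ := (vNorm x)⁻¹ • x with hu
    have hun : vNorm u = 1 := by
      rw [hu, vNorm_smul, abs_of_pos (by positivity), inv_mul_cancel₀ hvn0]
    have hRu : R *ᵥ u = u := by
      rw [hu, Matrix.mulVec_smul, hRxx]
    have hmem : (1:ℝ) ∈ ((fun x => vNorm (R.mulVec x)) '' {x | vNorm x = 1}) :=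
      ⟨u, hun, by show vNorm (R *ᵥ u) = 1; rw [hRu]; exact hun⟩
    have hbdd : BddAbove ((fun x => vNorm (R.mulVec x)) '' {x | vNorm x = 1}) := by
      refine ⟨1, ?_⟩
      rintro r ⟨w, hw, rfl⟩
      calc vNorm (R.mulVec w) ≤ vNorm w := vNorm_le_iff (hRcon w)
        _ = 1 := hw
    have : (1:ℝ) ≤ mNorm R := le_csSup hbdd hmem
    linarith
  · -- trivial intersection → mNorm R < 1
    intro hker
    -- pointwise strict bound
    have hstrict : ∀ x : Fin n → ℝ, x ⬝ᵥ x = 1 → (R *ᵥ x) ⬝ᵥ (R *ᵥ x) < 1 := by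
      intro x hx1
      by_contra hc
      push_neg at hc
      set vx : Fin n → ℝ := V *ᵥ x with hvx
      set y : Fin n → ℝ := F *ᵥ vx with hy
      have hRxy : R *ᵥ x = (1/2 : ℝ) • (x + y) := hRx x
      have hdexp : (R *ᵥ x) ⬝ᵥ (R *ᵥ x)
          = (1/4) * (1 + 2 * (x ⬝ᵥ y) + y ⬝ᵥ y) := by
        rw [hRxy, smul_dotProduct, dotProduct_smul]
        rw [dotProduct_add, add_dotProduct, add_dotProduct, dotProduct_comm y x, hx1]
        simp [smul_eq_mul]; ring
      have hbvx : vx ⬝ᵥ vx ≤ 1 := by rw [← hx1]; exact hVcon x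
      have hb : y ⬝ᵥ y ≤ vx ⬝ᵥ vx := hFcon vx
      have hcs : (x ⬝ᵥ y)^2 ≤ 1 * (y ⬝ᵥ y) := by
        have := cs_form (M := (1 : Matrix (Fin n) (Fin n) ℝ)) (by simp)
          (fun v => by simpa using dot_nonneg v) x y
        simpa [hx1] using this
      have hc1 : (1:ℝ) ≤ (1/4) * (1 + 2 * (x ⬝ᵥ y) + y ⬝ᵥ y) := by
        rw [← hdexp]; exact hc
      have hbnn : (0:ℝ) ≤ y ⬝ᵥ y := dot_nonneg y
      -- deduce c = 1, b = 1
      have hcle : x ⬝ᵥ y ≤ 1 := by nlinarith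
      have hbeq : y ⬝ᵥ y = 1 := by nlinarith
      have hceq : x ⬝ᵥ y = 1 := by nlinarith
      -- x = y
      have hxy : x = y := by
        have hz : (x - y) ⬝ᵥ (x - y) = 0 := by
          rw [dotProduct_sub, sub_dotProduct, sub_dotProduct, dotProduct_comm y x]
          rw [hx1, hbeq, hceq]; ring
        have := dot_eq_zero hz
        funext i
        have := congrFun this i
        simpa [sub_eq_zero] using this
      -- equality case for F
      have hAz : A *ᵥ (B⁻¹ *ᵥ vx) = 0 := by
        have hid := hFid vx
        rw [← hy] at hid
        set T : ℝ := (A *ᵥ (B⁻¹ *ᵥ vx)) ⬝ᵥ (A *ᵥ (B⁻¹ *ᵥ vx)) with hT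
        have h2 : (0:ℝ) ≤ T := dot_nonneg _
        have h3 : ρ * T ≤ 0 := by linarith
        have h4 : (0:ℝ) ≤ ρ * T := mul_nonneg hρ.le h2
        have h5 : T = 0 :=
          (mul_eq_zero.mp (le_antisymm h3 h4)).resolve_left (ne_of_gt hρ)
        exact dot_eq_zero h5
      obtain ⟨hFvx, hAvx⟩ := hFfix vx hAz
      -- y = vx hence vx = x
      have hvxx : vx = x := by
        rw [hxy, hy]; exact hFvx.symm
      have hWx : (1 - W) *ᵥ x = 0 := by
        have h2 : (2:ℝ) • (W *ᵥ x) - x = x := by rw [← hVx x, ← hvx]; exact hvxx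
        rw [Matrix.sub_mulVec, Matrix.one_mulVec]
        funext i
        have := congrFun h2 i
        simp only [Pi.sub_apply, Pi.smul_apply, smul_eq_mul] at this
        simp only [Pi.sub_apply, Pi.zero_apply]
        linarith
      have hAx : A *ᵥ x = 0 := by rw [← hvxx]; exact hAvx
      have hmem : x ∈ LinearMap.ker (Matrix.mulVecLin (1 - W)) ⊓ LinearMap.ker A.mulVecLin := by
        rw [Submodule.mem_inf, LinearMap.mem_ker, LinearMap.mem_ker,
          Matrix.mulVecLin_apply, Matrix.mulVecLin_apply]
        exact ⟨hWx, hAx⟩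
      rw [hker, Submodule.mem_bot] at hmem
      rw [hmem] at hx1
      simp at hx1
    -- now the sup
    rcases Nat.eq_zero_or_pos n with hn | hn
    · subst hn
      have hempty : {x : Fin 0 → ℝ | vNorm x = 1} = ∅ := by
        ext x
        simp [vNorm]
      rw [mNorm, hempty]
      simp [Real.sSup_empty]
    · -- sphere compact and nonempty
      have hcont : Continuous fun x : Fin n → ℝ => vNorm (R *ᵥ x) := by
        have h1 : Continuous fun x : Fin n → ℝ => R *ᵥ x := by
          have := LinearMap.continuous_of_finiteDimensional (R.mulVecLin)
          exact this
        have h2 : Continuous fun v : Fin n → ℝ => vNorm v := by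
          unfold vNorm
          exact Real.continuous_sqrt.comp
            (continuous_finset_sum _ fun i _ => (continuous_apply i).pow 2)
        exact h2.comp h1
      have hcontv : Continuous fun v : Fin n → ℝ => vNorm v := by
        unfold vNorm
        exact Real.continuous_sqrt.comp
          (continuous_finset_sum _ fun i _ => (continuous_apply i).pow 2)
      have hclosed : IsClosed {x : Fin n → ℝ | vNorm x = 1} :=
        isClosed_eq hcontv continuous_const
      have hsub : {x : Fin n → ℝ | vNorm x = 1} ⊆ Metric.closedBall 0 1 := by
        intro x hx
        rw [Metric.mem_closedBall]
        rw [dist_pi_le_iff (by norm_num : (0:ℝ) ≤ 1)]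
        intro i
        have hx1 : x ⬝ᵥ x = 1 := vNorm_eq_one_iff.mp hx
        have hterm : x i * x i ≤ 1 := by
          rw [← hx1]
          exact Finset.single_le_sum
            (fun j (_ : j ∈ Finset.univ) => mul_self_nonneg (x j)) (Finset.mem_univ i)
        rw [Real.dist_eq]
        simp only [Pi.zero_apply, sub_zero]
        nlinarith [abs_nonneg (x i), abs_mul_abs_self (x i)]
      have hK : IsCompact {x : Fin n → ℝ | vNorm x = 1} :=
        (isCompact_closedBall (0 : Fin n → ℝ) 1).of_isClosed_subset hclosed hsub
      have hne : {x : Fin n → ℝ | vNorm x = 1}.Nonempty := by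
        refine ⟨Pi.single ⟨0, hn⟩ 1, ?_⟩
        rw [Set.mem_setOf_eq, vNorm_eq_one_iff]
        simp [dotProduct, Pi.single_apply]
      obtain ⟨x₀, hx₀, hmax⟩ := hK.exists_isMaxOn hne hcont.continuousOn
      have hlt : vNorm (R *ᵥ x₀) < 1 := by
        rw [vNorm_lt_one_iff]
        exact hstrict x₀ (vNorm_eq_one_iff.mp hx₀)
      have : mNorm R ≤ vNorm (R *ᵥ x₀) := by
        apply csSup_le (hne.image _)
        rintro r ⟨w, hw, rfl⟩
        exact hmax hw
      linarith
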